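/- Let p > 2, p′ = p/(p−1) and a > 0, and take b = 1. Then the Legendre transform h of f(s,t) = (a/p)(|s|^{p/2} + |t|^{p/2})² is given explicitly by h(s̄, t̄) = (a^{1−p′}/p′) ( |s̄|^{p/(p−2)} + |t̄|^{p/(p−2)} )^{(p−2)/(p−1)} for all real s̄, t̄. -/

import Mathlib

/-!
With `r = p/2`, `f(x) = (a/p) ‖x‖_r^p` for the `ℓ^r` norm on `ℝ²`. Hölder's inequality bounds
`⟨x, ξ⟩ - f(x)` by `N M - (a/p) N^p`, where `N = ‖x‖_r` and `M = ‖ξ‖_{r'}` with the dual exponent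
`r' = p/(p-2)`, and Young's inequality bounds this by `(a^(1-p')/p') M^(p')`. Both are
equalities at a suitable multiple of `(|s̄|^(r'-2) s̄, |t̄|^(r'-2) t̄)`, and
`M^(p') = (|s̄|^r' + |t̄|^r')^((p-2)/(p-1))`.
-/

open Real

section Young

variable {p q a c : ℝ}

lemma mul_sub_div_mul_rpow_le (hpq : p.HolderConjugate q) (ha : 0 < a) (hc : 0 ≤ c) {y : ℝ}
    (hy : 0 ≤ y) : c * y - a / p * y ^ p ≤ a ^ (1 - q) / q * c ^ q := by
  have hy' : (a ^ (1 / p) * y) ^ p = a * y ^ p := by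
    rw [mul_rpow (by positivity) hy, ← rpow_mul ha.le, one_div_mul_cancel hpq.ne_zero, rpow_one]
  have hc' : (a ^ (-(1 / p)) * c) ^ q = a ^ (1 - q) * c ^ q := by
    rw [mul_rpow (by positivity) hc, ← rpow_mul ha.le]
    congr 2
    have := hpq.inv_add_inv_eq_one
    field_simp [hpq.ne_zero, hpq.symm.ne_zero] at this ⊢
    linarith
  have young := young_inequality_of_nonneg (by positivity) (by positivity) hpq
    (a := a ^ (1 / p) * y) (b := a ^ (-(1 / p)) * c)
  rw [hy', hc', mul_mul_mul_comm, ← rpow_add ha, add_neg_cancel, rpow_zero, one_mul] at young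
  linarith [show a * y ^ p / p = a / p * y ^ p by ring, show y * c = c * y by ring,
    show a ^ (1 - q) * c ^ q / q = a ^ (1 - q) / q * c ^ q by ring]

lemma mul_sub_div_mul_rpow_eq (hpq : p.HolderConjugate q) (ha : 0 < a) (hc : 0 ≤ c) :
    c * (c / a) ^ (q - 1) - a / p * ((c / a) ^ (q - 1)) ^ p = a ^ (1 - q) / q * c ^ q := by
  have hca : 0 ≤ c / a := by positivity
  have hpow : ((c / a) ^ (q - 1)) ^ p = (c / a) ^ q := by
    rw [← rpow_mul hca, hpq.symm.sub_one_mul_conj]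
  have hmul : c * (c / a) ^ (q - 1) = a * (c / a) ^ q := by
    calc c * (c / a) ^ (q - 1) = a * (c / a * (c / a) ^ (q - 1)) := by
          rw [← mul_assoc, mul_div_cancel₀ c ha.ne']
      _ = a * (c / a) ^ q := by
          rw [← rpow_one_add' hca (by linarith [hpq.symm.lt]), add_sub_cancel]
  rw [hpow, hmul, div_rpow hc ha.le, rpow_sub ha, rpow_one]
  have := hpq.inv_add_inv_eq_one
  field_simp [hpq.ne_zero, hpq.symm.ne_zero] at this ⊢
  linear_combination (-(c ^ q)) * this

end Young

section LpNorm

variable {ι : Type*} {r r' : ℝ}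

noncomputable def holderDual (r' : ℝ) (ξ : ι → ℝ) : ι → ℝ := fun i ↦ |ξ i| ^ (r' - 2) * ξ i

lemma holderDual_mul_self (hr' : r' ≠ 0) (ξ : ι → ℝ) (i : ι) :
    holderDual r' ξ i * ξ i = |ξ i| ^ r' := by
  rw [holderDual, mul_assoc, ← sq, ← sq_abs, ← rpow_natCast, ← rpow_add' (abs_nonneg _)]
  · norm_num
  · norm_num; exact hr'

lemma abs_holderDual_rpow (hr : r.HolderConjugate r') (ξ : ι → ℝ) (i : ι) :
    |holderDual r' ξ i| ^ r = |ξ i| ^ r' := by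
  have hsub : r' - 2 + 1 ≠ 0 := by linarith [hr.symm.sub_one_pos]
  rw [holderDual, abs_mul, abs_of_nonneg (by positivity), ← rpow_add_one' (abs_nonneg _) hsub,
    ← rpow_mul (abs_nonneg _), show r' - 2 + 1 = r' - 1 by ring, hr.symm.sub_one_mul_conj]

variable [Fintype ι]

noncomputable def lpNorm' (r : ℝ) (x : ι → ℝ) : ℝ := (∑ i, |x i| ^ r) ^ (1 / r)

lemma lpNorm'_nonneg (x : ι → ℝ) : 0 ≤ lpNorm' r x := by unfold lpNorm'; positivity

lemma lpNorm'_rpow (x : ι → ℝ) (p : ℝ) :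
    lpNorm' r x ^ p = (∑ i, |x i| ^ r) ^ (p / r) := by
  rw [lpNorm', ← rpow_mul (by positivity), one_div_mul_eq_div]

lemma sum_mul_le_lpNorm'_mul_lpNorm' (hr : r.HolderConjugate r') (x ξ : ι → ℝ) :
    ∑ i, x i * ξ i ≤ lpNorm' r x * lpNorm' r' ξ :=
  inner_le_Lp_mul_Lq _ _ _ hr

lemma lpNorm'_smul_holderDual (hr : r.HolderConjugate r') {κ : ℝ} (hκ : 0 ≤ κ) (ξ : ι → ℝ) :
    lpNorm' r (κ • holderDual r' ξ) = κ * (∑ i, |ξ i| ^ r') ^ (1 / r) := by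
  simp only [lpNorm', Pi.smul_apply, smul_eq_mul, abs_mul, abs_of_nonneg hκ]
  simp only [mul_rpow hκ (abs_nonneg _), abs_holderDual_rpow hr, ← Finset.mul_sum]
  rw [mul_rpow (by positivity) (by positivity), ← rpow_mul hκ, mul_one_div_cancel hr.ne_zero,
    rpow_one]

lemma sum_smul_holderDual_mul (hr : r.HolderConjugate r') {κ : ℝ} (hκ : 0 ≤ κ) (ξ : ι → ℝ) :
    ∑ i, (κ • holderDual r' ξ) i * ξ i = lpNorm' r (κ • holderDual r' ξ) * lpNorm' r' ξ := by
  simp only [Pi.smul_apply, smul_eq_mul, mul_assoc, holderDual_mul_self hr.symm.ne_zero,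
    ← Finset.mul_sum]
  have hsum : 1 / r + 1 / r' = 1 := by rw [one_div, one_div, hr.inv_add_inv_eq_one]
  rw [lpNorm'_smul_holderDual hr hκ, lpNorm', mul_assoc,
    ← rpow_add' (by positivity) (by rw [hsum]; exact one_ne_zero), hsum, rpow_one]

end LpNorm

section Legendre

variable {ι : Type*} [Fintype ι] {p q r r' a : ℝ}

theorem ciSup_sum_mul_sub_lpNorm'_rpow (hpq : p.HolderConjugate q) (hr : r.HolderConjugate r')
    (ha : 0 < a) (ξ : ι → ℝ) :
    ⨆ x : ι → ℝ, (∑ i, x i * ξ i - a / p * lpNorm' r x ^ p) =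
      a ^ (1 - q) / q * lpNorm' r' ξ ^ q := by
  set M := lpNorm' r' ξ
  have hM : 0 ≤ M := lpNorm'_nonneg ξ
  refine (IsGreatest.isLUB ⟨?_, ?_⟩).ciSup_eq
  · set y := (M / a) ^ (q - 1)
    set S := ∑ i, |ξ i| ^ r'
    have hnorm : lpNorm' r ((y / S ^ (1 / r)) • holderDual r' ξ) = y := by
      rw [lpNorm'_smul_holderDual hr (by positivity)]
      rcases eq_or_ne S 0 with hS | hS
      -- for `ξ = 0` the junk value `y / 0 = 0` is harmless, since then `y = 0`
      · have hM0 : M = 0 := by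
          rw [show M = S ^ (1 / r') from rfl, hS, zero_rpow hr.symm.one_div_ne_zero]
        rw [hS, show y = (M / a) ^ (q - 1) from rfl, hM0, zero_div,
          zero_rpow hpq.symm.sub_one_ne_zero, zero_div, zero_mul]
      · exact div_mul_cancel₀ _ (by positivity)
    refine ⟨(y / S ^ (1 / r)) • holderDual r' ξ, ?_⟩
    dsimp only
    rw [sum_smul_holderDual_mul hr (by positivity), hnorm, mul_comm y M,
      mul_sub_div_mul_rpow_eq hpq ha hM]
  · rintro _ ⟨x, rfl⟩
    calc ∑ i, x i * ξ i - a / p * lpNorm' r x ^ p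
        ≤ M * lpNorm' r x - a / p * lpNorm' r x ^ p := by
          rw [mul_comm M]; gcongr; exact sum_mul_le_lpNorm'_mul_lpNorm' hr x ξ
      _ ≤ a ^ (1 - q) / q * M ^ q := mul_sub_div_mul_rpow_le hpq ha hM (lpNorm'_nonneg x)

end Legendre

lemma lpNorm'_half_rpow {p : ℝ} (hp : 0 < p) (s t : ℝ) :
    lpNorm' (p / 2) ![s, t] ^ p = |s| ^ p + 2 * |s| ^ (p / 2) * |t| ^ (p / 2) + |t| ^ p := by
  have hsq (x : ℝ) : (|x| ^ (p / 2)) ^ 2 = |x| ^ p := by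
    rw [← rpow_natCast, ← rpow_mul (abs_nonneg x)]; congr 1; push_cast; ring
  rw [lpNorm'_rpow, Fin.sum_univ_two, div_div_cancel₀ hp.ne', ← hsq s, ← hsq t]
  simp only [Matrix.cons_val_zero, Matrix.cons_val_one, Matrix.cons_val_fin_one]
  rw [show (2 : ℝ) = ((2 : ℕ) : ℝ) by norm_num, rpow_natCast]
  ring

/-- for `b = 1`, the Legendre transform of
`f(s,t) = (a/p)(|s|^(p/2) + |t|^(p/2))² = (a/p)(|s|^p + 2|s|^(p/2)|t|^(p/2) + |t|^p)` is
`h(s̄,t̄) = (a^(1-p')/p') (|s̄|^(p/(p-2)) + |t̄|^(p/(p-2)))^((p-2)/(p-1))`. -/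
theorem stmt_12 (p p' a : ℝ) (hp : 2 < p) (hp' : p' = p / (p - 1)) (ha : 0 < a)
    (h : ℝ → ℝ → ℝ)
    (hh : ∀ sb tb : ℝ, h sb tb = ⨆ st : ℝ × ℝ,
      (st.1 * sb + st.2 * tb -
        (a / p) * (|st.1| ^ p + 2 * |st.1| ^ (p / 2) * |st.2| ^ (p / 2) + |st.2| ^ p)))
    (sb tb : ℝ) :
    h sb tb =
      (a ^ (1 - p') / p') *
        (|sb| ^ (p / (p - 2)) + |tb| ^ (p / (p - 2))) ^ ((p - 2) / (p - 1)) := by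
  have hpq : p.HolderConjugate p' := (holderConjugate_iff_eq_conjExponent (by linarith)).2 hp'
  have hr : (p / 2).HolderConjugate (p / (p - 2)) :=
    (holderConjugate_iff_eq_conjExponent (by linarith)).2 (by field_simp)
  have hexp : p' / (p / (p - 2)) = (p - 2) / (p - 1) := by
    rw [hp']; field_simp
  rw [hh]
  calc _ = ⨆ x : Fin 2 → ℝ, (∑ i, x i * ![sb, tb] i - a / p * lpNorm' (p / 2) x ^ p) :=
        (finTwoArrowEquiv ℝ).symm.iSup_congr fun st ↦ by
          rw [finTwoArrowEquiv_symm_apply, Fin.sum_univ_two, lpNorm'_half_rpow (by linarith)]; rfl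
    _ = a ^ (1 - p') / p' * lpNorm' (p / (p - 2)) ![sb, tb] ^ p' :=
        ciSup_sum_mul_sub_lpNorm'_rpow hpq hr ha _
    _ = _ := by rw [lpNorm'_rpow, hexp, Fin.sum_univ_two]; rfl
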